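/- For a binary set of desirable option sets K, K is coherent if and only if its corresponding set of desirable options D_K = {u : {u} ∈ K} is coherent. -/

import Mathlib

/-- Axiom K0: removal of the zero option. -/
def AxK0 {V : Type*} [AddCommGroup V] [Module ℝ V] (K : Set (Set V)) : Prop :=
  ∀ A ∈ K, A \ {0} ∈ K

/-- Axiom K1: the singleton of zero is not a desirable option set. -/
def AxK1 {V : Type*} [AddCommGroup V] [Module ℝ V] (K : Set (Set V)) : Prop :=
  ({0} : Set V) ∉ K

/-- Axiom K2: singletons of (background-)positive options are desirable option sets. -/
def AxK2 {V : Type*} [AddCommGroup V] [Module ℝ V] (Vpos : Set V) (K : Set (Set V)) : Prop :=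
  ∀ u ∈ Vpos, ({u} : Set V) ∈ K

/-- Axiom K3: closure under elementwise positive combinations of two members. -/
def AxK3 {V : Type*} [AddCommGroup V] [Module ℝ V] (K : Set (Set V)) : Prop :=
  ∀ A1 ∈ K, ∀ A2 ∈ K, ∀ l m : V → V → ℝ,
    (∀ u ∈ A1, ∀ v ∈ A2, 0 ≤ l u v ∧ 0 ≤ m u v ∧ 0 < l u v + m u v) →
    {w : V | ∃ u ∈ A1, ∃ v ∈ A2, w = l u v • u + m u v • v} ∈ K

/-- Axiom K4: upward closure under inclusion (within finite option sets). -/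
def AxK4 {V : Type*} [AddCommGroup V] [Module ℝ V] (K : Set (Set V)) : Prop :=
  ∀ A1 ∈ K, ∀ A2 : Set V, A2.Finite → A1 ⊆ A2 → A2 ∈ K

/-- Coherence of a set of desirable option sets (a subset of the finite option sets). -/
def CoherentK {V : Type*} [AddCommGroup V] [Module ℝ V] (Vpos : Set V)
    (K : Set (Set V)) : Prop :=
  (∀ A ∈ K, A.Finite) ∧ AxK0 K ∧ AxK1 K ∧ AxK2 Vpos K ∧ AxK3 K ∧ AxK4 K

/-- Coherence of a set of desirable options. -/
def CoherentD {V : Type*} [AddCommGroup V] [Module ℝ V] (Vpos D : Set V) : Prop :=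
  (0 : V) ∉ D ∧ Vpos ⊆ D ∧
  ∀ u ∈ D, ∀ v ∈ D, ∀ l m : ℝ, 0 ≤ l → 0 ≤ m → 0 < l + m → l • u + m • v ∈ D

/-- `K_D`: the binary set of desirable option sets generated by `D`. -/
def KD {V : Type*} [AddCommGroup V] [Module ℝ V] (D : Set V) : Set (Set V) :=
  {A | A.Finite ∧ (A ∩ D).Nonempty}

/-- `D_K`: the set of options whose singletons belong to `K`. -/
def DK {V : Type*} [AddCommGroup V] [Module ℝ V] (K : Set (Set V)) : Set V :=
  {u | ({u} : Set V) ∈ K}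

/-- A set of desirable option sets is binary if it is determined by singleton assessments. -/
def BinaryK {V : Type*} [AddCommGroup V] [Module ℝ V] (K : Set (Set V)) : Prop :=
  ∀ A : Set V, A.Finite → (A ∈ K ↔ ∃ u ∈ A, ({u} : Set V) ∈ K)

/-- `posi S`: all finite positive linear combinations of elements of `S`. -/
def Posi {V : Type*} [AddCommGroup V] [Module ℝ V] (S : Set V) : Set V :=
  {w | ∃ n : ℕ, 0 < n ∧ ∃ (l : Fin n → ℝ) (u : Fin n → V),
    (∀ k, 0 < l k) ∧ (∀ k, u k ∈ S) ∧ w = ∑ k, l k • u k}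

/-- Total set of desirable options. -/
def TotalD {V : Type*} [AddCommGroup V] [Module ℝ V] (Vpos D : Set V) : Prop :=
  CoherentD Vpos D ∧ ∀ u : V, u ≠ 0 → u ∈ D ∨ -u ∈ D

/-- Total set of desirable option sets. -/
def TotalK {V : Type*} [AddCommGroup V] [Module ℝ V] (Vpos : Set V)
    (K : Set (Set V)) : Prop :=
  CoherentK Vpos K ∧ ∀ u : V, u ≠ 0 → ({u, -u} : Set V) ∈ K

/-- Mixing set of desirable options. -/
def MixingD {V : Type*} [AddCommGroup V] [Module ℝ V] (Vpos D : Set V) : Prop :=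
  CoherentD Vpos D ∧ ∀ A : Set V, A.Finite → (Posi A ∩ D).Nonempty → (A ∩ D).Nonempty

/-- Mixing set of desirable option sets. -/
def MixingK {V : Type*} [AddCommGroup V] [Module ℝ V] (Vpos : Set V)
    (K : Set (Set V)) : Prop :=
  CoherentK Vpos K ∧
    ∀ A B : Set V, A.Finite → B ∈ K → A ⊆ B → B ⊆ Posi A → A ∈ K

/-- `V_{≤0}`: the non-positive options (zero together with the strictly negative options). -/
def Vneg {V : Type*} [AddCommGroup V] [Module ℝ V] (Vpos : Set V) : Set V :=
  {u | u = 0 ∨ -u ∈ Vpos}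

/-- The operator `RN`, adding smaller option sets by removing non-positive options. -/
def RN {V : Type*} [AddCommGroup V] [Module ℝ V] (Vpos : Set V)
    (K : Set (Set V)) : Set (Set V) :=
  {A | A.Finite ∧ ∃ B ∈ K, B \ Vneg Vpos ⊆ A ∧ A ⊆ B}

/-!
A binary `K` is determined by its singletons: it is exactly `K_D` for `D = D_K`, the finite option
sets that meet `D`. Each axiom on `K_D` then reduces to the corresponding axiom on `D` through a
single witness `u ∈ A ∩ D`: the witnesses of `A₁` and `A₂` combine into a witness of their
elementwise combination. Conversely, applying K3 to two singletons is exactly the closure of `D_K`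
under positive combinations.
-/

section

variable {V : Type*} [AddCommGroup V] [Module ℝ V]

theorem setOf_smul_add_smul_singleton (l m : V → V → ℝ) (u v : V) :
    {w : V | ∃ a ∈ ({u} : Set V), ∃ b ∈ ({v} : Set V), w = l a b • a + m a b • b} =
      {l u v • u + m u v • v} := by
  ext w
  simp only [Set.mem_ofPred_eq, Set.mem_singleton_iff, exists_eq_left]

theorem Set.Finite.setOf_smul_add_smul {A₁ A₂ : Set V} (h₁ : A₁.Finite) (h₂ : A₂.Finite)
    (l m : V → V → ℝ) :
    {w : V | ∃ u ∈ A₁, ∃ v ∈ A₂, w = l u v • u + m u v • v}.Finite := by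
  convert h₁.image2 (fun u v => l u v • u + m u v • v) h₂ using 1
  ext w
  simp only [Set.mem_ofPred_eq, Set.mem_image2, eq_comm]

theorem AxK3.smul_add_smul_mem_DK {K : Set (Set V)} (h : AxK3 K) {u v : V}
    (hu : u ∈ DK K) (hv : v ∈ DK K) {l m : ℝ} (hl : 0 ≤ l) (hm : 0 ≤ m) (hlm : 0 < l + m) :
    l • u + m • v ∈ DK K := by
  have := h {u} hu {v} hv (fun _ _ => l) (fun _ _ => m) fun _ _ _ _ => ⟨hl, hm, hlm⟩
  rwa [setOf_smul_add_smul_singleton] at this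

theorem CoherentK.coherentD_DK {Vpos : Set V} {K : Set (Set V)} (h : CoherentK Vpos K) :
    CoherentD Vpos (DK K) :=
  let ⟨_, _, h₁, h₂, h₃, _⟩ := h
  ⟨h₁, h₂, fun _ hu _ hv _ _ hl hm hlm => h₃.smul_add_smul_mem_DK hu hv hl hm hlm⟩

theorem BinaryK.eq_KD_DK {K : Set (Set V)} (hK : ∀ A ∈ K, A.Finite) (hbin : BinaryK K) :
    K = KD (DK K) := by
  ext A
  constructor
  · intro hA
    obtain ⟨u, huA, hu⟩ := (hbin A (hK A hA)).mp hA
    exact ⟨hK A hA, u, huA, hu⟩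
  · rintro ⟨hA, u, huA, hu⟩
    exact (hbin A hA).mpr ⟨u, huA, hu⟩

variable {D : Set V}

theorem axK0_KD (h₀ : (0 : V) ∉ D) : AxK0 (KD D) := by
  rintro A ⟨hA, u, huA, hu⟩
  exact ⟨hA.sdiff, u, ⟨huA, fun hu0 => h₀ (hu0 ▸ hu)⟩, hu⟩

theorem axK1_KD (h₀ : (0 : V) ∉ D) : AxK1 (KD D) := by
  rintro ⟨-, u, rfl, hu⟩
  exact h₀ hu

theorem axK2_KD {Vpos : Set V} (hpos : Vpos ⊆ D) : AxK2 Vpos (KD D) :=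
  fun u hu => ⟨Set.finite_singleton u, u, rfl, hpos hu⟩

theorem axK3_KD
    (hD : ∀ u ∈ D, ∀ v ∈ D, ∀ l m : ℝ, 0 ≤ l → 0 ≤ m → 0 < l + m → l • u + m • v ∈ D) :
    AxK3 (KD D) := by
  rintro A₁ ⟨hA₁, u, huA, hu⟩ A₂ ⟨hA₂, v, hvA, hv⟩ l m hlm
  obtain ⟨hl, hm, hs⟩ := hlm u huA v hvA
  exact ⟨hA₁.setOf_smul_add_smul hA₂ l m, _, ⟨u, huA, v, hvA, rfl⟩, hD u hu v hv _ _ hl hm hs⟩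

theorem axK4_KD : AxK4 (KD D) := by
  rintro A₁ ⟨-, u, huA, hu⟩ A₂ hA₂ hsub
  exact ⟨hA₂, u, hsub huA, hu⟩

theorem CoherentD.coherentK_KD {Vpos : Set V} (h : CoherentD Vpos D) :
    CoherentK Vpos (KD D) :=
  let ⟨h₀, hpos, hD⟩ := h
  ⟨fun _ hA => hA.1, axK0_KD h₀, axK1_KD h₀, axK2_KD hpos, axK3_KD hD, axK4_KD⟩

end

theorem stmt3 {V : Type*} [AddCommGroup V] [Module ℝ V]
    (Vpos : Set V) (K : Set (Set V)) (hK : ∀ A ∈ K, A.Finite)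
    (hbin : BinaryK K) :
    CoherentK Vpos K ↔ CoherentD Vpos (DK K) := by
  refine ⟨CoherentK.coherentD_DK, fun hD => ?_⟩
  rw [hbin.eq_KD_DK hK]
  exact hD.coherentK_KD
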